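/- arXiv:2507.13710 — 2 statements merged into one kernel-verified Lean document; each statement's English description precedes it below -/
import Mathlib

section
/- Sigmoid lower bound on the probability of the optimal action: let a* ∈ A be a maximizer of Q over A, let A_c ⊆ A be a nonempty constrained subset, set Δ = Q(a*) − max_{a ∈ A_c} Q(a) (so Δ ≥ 0) and c = p(a*) / (n · max_{a' ∈ A} p(a')), where n = |A|. Then the Gibbs policy satisfies π(a*) ≥ c / (1 + exp(−αΔ/β)), provided α ≥ 0. -/
/-- Sigmoid lower bound on the probability of the optimal action:
with `a*` a maximizer of `Q`, `Δ = Q(a*) − max_{a ∈ A_c} Q(a)` and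
`c = p(a*) / (n · max_{a'} p(a'))`, the Gibbs policy satisfies
`π(a*) ≥ c / (1 + exp(−αΔ/β))`, provided `α ≥ 0`. -/
theorem gibbs_policy_sigmoid_lower_bound
    {A : Type*} [Fintype A] [Nonempty A]
    (p Q : A → ℝ) (α β : ℝ) (hα : 0 ≤ α) (hβ : 0 < β)
    (hp_pos : ∀ a, 0 < p a)
    (π : A → ℝ)
    (hπ : ∀ a, π a = p a * Real.exp (α * Q a / β) /
      (∑ a', p a' * Real.exp (α * Q a' / β)))
    (astar : A) (hastar : ∀ a : A, Q a ≤ Q astar)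
    (Ac : Finset A) (hAc : Ac.Nonempty) :
    π astar ≥
      (p astar / ((Fintype.card A : ℝ) *
          Finset.univ.sup' Finset.univ_nonempty p)) /
        (1 + Real.exp (-(α * (Q astar - Ac.sup' hAc Q)) / β)) := by
  set M : ℝ := Finset.univ.sup' Finset.univ_nonempty p with hM
  have hMpos : 0 < M := lt_of_lt_of_le (hp_pos (Classical.arbitrary A))
    (Finset.le_sup' p (Finset.mem_univ _))
  have hn : (0 : ℝ) < (Fintype.card A : ℝ) := by
    exact_mod_cast Fintype.card_pos
  set c : ℝ := p astar / ((Fintype.card A : ℝ) * M) with hc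
  have hcpos : 0 < c := div_pos (hp_pos astar) (mul_pos hn hMpos)
  have h1 : c / (1 + Real.exp (-(α * (Q astar - Ac.sup' hAc Q)) / β)) ≤ c := by
    apply div_le_self hcpos.le
    linarith [Real.exp_pos (-(α * (Q astar - Ac.sup' hAc Q)) / β)]
  refine le_trans h1 ?_
  rw [hπ]
  set Z : ℝ := ∑ a', p a' * Real.exp (α * Q a' / β) with hZ
  have hZpos : 0 < Z := Finset.sum_pos
    (fun a _ => mul_pos (hp_pos a) (Real.exp_pos _)) Finset.univ_nonempty
  have hestar : 0 < Real.exp (α * Q astar / β) := Real.exp_pos _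
  have hZle : Z ≤ (Fintype.card A : ℝ) * M * Real.exp (α * Q astar / β) := by
    calc Z ≤ ∑ _a' : A, M * Real.exp (α * Q astar / β) := by
          apply Finset.sum_le_sum
          intro a _
          apply mul_le_mul (Finset.le_sup' p (Finset.mem_univ a))
            (Real.exp_le_exp.2 ?_) (Real.exp_pos _).le hMpos.le
          exact div_le_div_of_nonneg_right
            (mul_le_mul_of_nonneg_left (hastar a) hα) hβ.le
      _ = (Fintype.card A : ℝ) * M * Real.exp (α * Q astar / β) := by
          rw [Finset.sum_const, Finset.card_univ, nsmul_eq_mul, mul_assoc]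
  have key : c ≤ p astar * Real.exp (α * Q astar / β) / Z := by
    rw [hc, div_le_div_iff₀ (mul_pos hn hMpos) hZpos]
    calc p astar * Z ≤ p astar * ((Fintype.card A : ℝ) * M * Real.exp (α * Q astar / β)) :=
          mul_le_mul_of_nonneg_left hZle (hp_pos astar).le
      _ = p astar * Real.exp (α * Q astar / β) * ((Fintype.card A : ℝ) * M) := by ring
  exact key
end

section
/- Optimality gap bound (Theorem 2): let A_c ⊆ A be a nonempty constrained subset, let V_hard = max_{a ∈ A_c} Q(a) and V* = max_{a ∈ A} Q(a), and set Δ = V* − V_hard (so Δ ≥ 0). Let a* ∈ A be a maximizer of Q over A and c = p(a*) / (n · max_{a' ∈ A} p(a')), where n = |A|. Assume α ≥ 0 and Q(a) ≥ V_hard for every a ∈ A. Then the expected value of the Gibbs policy, V_soft = ∑_a π(a)·Q(a), satisfies V_soft − V_hard ≥ (c / (1 + exp(−αΔ/β))) · Δ. -/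
/-- Optimality Gap Bound, Theorem 2: with
`V_hard = max_{a ∈ A_c} Q(a)`, `V* = max_{a} Q(a)`, `Δ = V* − V_hard`,
`a*` a maximizer of `Q`, `c = p(a*) / (n · max_{a'} p(a'))`, assuming `α ≥ 0`
and `Q(a) ≥ V_hard` for all `a`, the expected value `V_soft = ∑ π(a)·Q(a)`
of the Gibbs policy satisfies
`V_soft − V_hard ≥ (c / (1 + exp(−αΔ/β))) · Δ`. -/
theorem gibbs_policy_optimality_gap_bound
    {A : Type*} [Fintype A] [Nonempty A]
    (p Q : A → ℝ) (α β : ℝ) (hα : 0 ≤ α) (hβ : 0 < β)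
    (hp_pos : ∀ a, 0 < p a)
    (π : A → ℝ)
    (hπ : ∀ a, π a = p a * Real.exp (α * Q a / β) /
      (∑ a', p a' * Real.exp (α * Q a' / β)))
    (astar : A) (hastar : ∀ a : A, Q a ≤ Q astar)
    (Ac : Finset A) (hAc : Ac.Nonempty)
    (hQ : ∀ a : A, Ac.sup' hAc Q ≤ Q a) :
    (∑ a, π a * Q a) - Ac.sup' hAc Q ≥
      ((p astar / ((Fintype.card A : ℝ) *
          Finset.univ.sup' Finset.univ_nonempty p)) /
        (1 + Real.exp (-(α * (Q astar - Ac.sup' hAc Q)) / β))) *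
        (Q astar - Ac.sup' hAc Q) := by
  set V := Ac.sup' hAc Q with hV
  set Z := ∑ a', p a' * Real.exp (α * Q a' / β) with hZ
  set pmax := Finset.univ.sup' Finset.univ_nonempty p with hpmax
  have hΔ : 0 ≤ Q astar - V := sub_nonneg.2 (hQ astar)
  have hterm_pos : ∀ a, 0 < p a * Real.exp (α * Q a / β) := fun a =>
    mul_pos (hp_pos a) (Real.exp_pos _)
  have hZpos : 0 < Z := Finset.sum_pos (fun a _ => hterm_pos a) Finset.univ_nonempty
  have hpmax_pos : 0 < pmax := lt_of_lt_of_le (hp_pos astar)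
    (Finset.le_sup' p (Finset.mem_univ astar))
  have hn_pos : (0 : ℝ) < (Fintype.card A : ℝ) := by
    exact_mod_cast Fintype.card_pos
  -- Z ≤ n * pmax * exp(α Q* / β)
  have hZle : Z ≤ (Fintype.card A : ℝ) * pmax * Real.exp (α * Q astar / β) := by
    have : Z ≤ ∑ _a : A, pmax * Real.exp (α * Q astar / β) := by
      apply Finset.sum_le_sum
      intro a _
      apply mul_le_mul (Finset.le_sup' p (Finset.mem_univ a))
        (Real.exp_le_exp.2 (div_le_div_of_nonneg_right
          (mul_le_mul_of_nonneg_left (hastar a) hα) hβ.le))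
        (Real.exp_pos _).le hpmax_pos.le
    simpa [Finset.sum_const, nsmul_eq_mul, mul_assoc] using this
  -- π astar ≥ c
  have hc_le : p astar / ((Fintype.card A : ℝ) * pmax) ≤ π astar := by
    rw [hπ astar]
    rw [div_le_div_iff₀ (by positivity) hZpos]
    calc p astar * Z ≤ p astar * ((Fintype.card A : ℝ) * pmax * Real.exp (α * Q astar / β)) :=
          mul_le_mul_of_nonneg_left hZle (hp_pos astar).le
      _ = p astar * Real.exp (α * Q astar / β) * ((Fintype.card A : ℝ) * pmax) := by ring
  have hπnonneg : ∀ a, 0 ≤ π a := fun a => by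
    rw [hπ a]; exact div_nonneg (hterm_pos a).le hZpos.le
  have hπsum : ∑ a, π a = 1 := by
    simp only [hπ]
    rw [← Finset.sum_div, div_self hZpos.ne']
  -- LHS rewrite
  have hL : ∑ a, π a * (Q a - V) = (∑ a, π a * Q a) - V := by
    simp only [mul_sub, Finset.sum_sub_distrib, ← Finset.sum_mul, hπsum, one_mul]
  rw [ge_iff_le, ← hL]
  have hden : (1:ℝ) ≤ 1 + Real.exp (-(α * (Q astar - V)) / β) :=
    le_add_of_nonneg_right (Real.exp_pos _).le
  have hc0 : 0 ≤ p astar / ((Fintype.card A : ℝ) * pmax) := div_nonneg (hp_pos astar).le (mul_pos hn_pos hpmax_pos).le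
  calc p astar / ((Fintype.card A : ℝ) * pmax) /
        (1 + Real.exp (-(α * (Q astar - V)) / β)) * (Q astar - V)
      ≤ p astar / ((Fintype.card A : ℝ) * pmax) * (Q astar - V) :=
        mul_le_mul_of_nonneg_right (div_le_self hc0 hden) hΔ
    _ ≤ π astar * (Q astar - V) := mul_le_mul_of_nonneg_right hc_le hΔ
    _ ≤ ∑ a, π a * (Q a - V) :=
        Finset.single_le_sum (f := fun a => π a * (Q a - V))
          (fun a _ => mul_nonneg (hπnonneg a) (sub_nonneg.2 (hQ a)))
          (Finset.mem_univ astar)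
end
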